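/- arXiv:2005.09169 — 2 statements merged into one kernel-verified Lean document; each statement's English description precedes it below -/
import Mathlib

section
/- Let S be a sequence of integers each weighted by a nonnegative integer w(s), and let S' be obtained from S by replacing each element s by a run of w(s) consecutive fresh integers (assigned in increasing order of the value s, so the relative order of runs in value space matches the order of the original values). Then the heaviest increasing subsequence weight of S equals the longest increasing subsequence length of S'. -/
/-- `hEnd S v` is `h⊣(v)`: the sum of the weights of the elements of the weighted
sequence `S` (value-weight pairs) whose value is at most `v`. -/
def hEnd (S : List (ℕ × ℕ)) (v : ℕ) : ℕ :=
  ((S.filter fun p => decide (p.1 ≤ v)).map Prod.snd).sum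

/-- Replace each weighted element `(v, w)` of `S` by the run of `w` consecutive
integers `h⊣(v) - w + 1, …, h⊣(v)`, in position order. -/
def blow (S : List (ℕ × ℕ)) : List ℕ :=
  S.flatMap fun p => List.range' (hEnd S p.1 - p.2 + 1) p.2


/-- The heaviest increasing subsequence weight of a weighted integer sequence. -/
noncomputable def hisWeight (S : List (ℕ × ℕ)) : ℕ :=
  sSup {x | ∃ T : List (ℕ × ℕ), T.Sublist S ∧ (T.map Prod.fst).Chain' (· < ·) ∧
    x = (T.map Prod.snd).sum}

/-- The longest increasing subsequence length of an integer sequence. -/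
noncomputable def lisLength (L : List ℕ) : ℕ :=
  sSup {x | ∃ T : List ℕ, T.Sublist L ∧ T.Chain' (· < ·) ∧ x = T.length}

/-! The runs of distinct values occupy disjoint intervals of integers, ordered like the values
themselves. Hence an increasing subsequence of `S` expands into an increasing subsequence of `S'`
whose length is its weight; conversely, an increasing subsequence of `S'` visits the runs of an
increasing sequence of values and takes at most `w(s)` elements from the run of `s`. -/

section Runs

variable {α β : Type*} [LinearOrder α] [Preorder β] {B : α × ℕ → List β}

theorem pairwise_flatMap_of_runs_separated {U : List (α × ℕ)}
    (hU : (U.map Prod.fst).Pairwise (· < ·)) (hB : ∀ p ∈ U, (B p).Pairwise (· < ·))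
    (hsep : ∀ p ∈ U, ∀ q ∈ U, p.1 < q.1 → ∀ a ∈ B p, ∀ b ∈ B q, a < b) :
    (U.flatMap B).Pairwise (· < ·) :=
  List.pairwise_flatMap.mpr
    ⟨hB, (List.pairwise_map.mp hU).imp_of_mem fun ha hb hab => hsep _ ha _ hb hab⟩

/-- The last conjunct (every chosen run is visited by `T`) is what lets the induction step put
the new head below all of `U`. -/
theorem exists_sublist_length_le_sum_of_sublist_flatMap {S : List (α × ℕ)}
    (hnd : (S.map Prod.fst).Nodup) (hlen : ∀ p ∈ S, (B p).length ≤ p.2)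
    (hsep : ∀ p ∈ S, ∀ q ∈ S, p.1 < q.1 → ∀ a ∈ B p, ∀ b ∈ B q, a < b)
    {T : List β} (hT : T.Sublist (S.flatMap B)) (hTp : T.Pairwise (· < ·)) :
    ∃ U : List (α × ℕ), U.Sublist S ∧ (U.map Prod.fst).Pairwise (· < ·) ∧
      T.length ≤ (U.map Prod.snd).sum ∧ ∀ u ∈ U, ∃ x ∈ B u, x ∈ T := by
  induction S generalizing T with
  | nil => exact ⟨[], by simp_all⟩
  | cons p S ih =>
    obtain ⟨t₁, t₂, rfl, h₁, h₂⟩ := List.sublist_append_iff.mp (List.flatMap_cons ▸ hT)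
    obtain ⟨-, hTp₂, hcross⟩ := List.pairwise_append.mp hTp
    obtain ⟨hp, hnd⟩ := List.nodup_cons.mp hnd
    obtain ⟨U, hU, hUp, hUlen, hUmem⟩ :=
      ih hnd (fun r hr => hlen r (.tail _ hr))
        (fun r hr s hs => hsep r (.tail _ hr) s (.tail _ hs)) h₂ hTp₂
    rcases eq_or_ne t₁ [] with rfl | ht₁
    · exact ⟨U, hU.cons p, hUp, by simpa using hUlen,
        fun u hu => (hUmem u hu).imp fun _ ⟨hxB, hxT⟩ => ⟨hxB, by simpa using hxT⟩⟩
    obtain ⟨y, hy⟩ := List.exists_mem_of_ne_nil t₁ ht₁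
    have hyB : y ∈ B p := h₁.subset hy
    have hlt : ∀ u ∈ U, p.1 < u.1 := by
      intro u hu
      obtain ⟨x, hxB, hxT⟩ := hUmem u hu
      have huS : u ∈ S := hU.subset hu
      have hne : p.1 ≠ u.1 := fun h => hp (h ▸ List.mem_map_of_mem huS)
      refine hne.lt_or_gt.resolve_right fun hup => ?_
      exact lt_asymm (hcross y hy x hxT) (hsep u (.tail _ huS) p (.head _) hup x hxB y hyB)
    refine ⟨p :: U, hU.cons_cons p, ?_, ?_, ?_⟩
    · exact List.pairwise_cons.mpr
        ⟨fun a ha => by obtain ⟨u, hu, rfl⟩ := List.mem_map.mp ha; exact hlt u hu, hUp⟩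
    · have := (hlen p (.head _)).trans' h₁.length_le
      simp only [List.length_append, List.map_cons, List.sum_cons]
      omega
    · rintro u (_ | ⟨_, hu⟩)
      · exact ⟨y, hyB, List.mem_append_left _ hy⟩
      · obtain ⟨x, hxB, hxT⟩ := hUmem u hu
        exact ⟨x, hxB, List.mem_append_right _ hxT⟩

end Runs

theorem hEnd_cons (p : ℕ × ℕ) (S : List (ℕ × ℕ)) (v : ℕ) :
    hEnd (p :: S) v = (if p.1 ≤ v then p.2 else 0) + hEnd S v := by
  unfold hEnd
  split_ifs with h <;> simp [h]

theorem hEnd_mono (S : List (ℕ × ℕ)) : Monotone (hEnd S) := by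
  intro v v' h
  induction S with
  | nil => rfl
  | cons p S ih =>
    simp only [hEnd_cons]
    split_ifs <;> omega

theorem le_hEnd_of_mem {S : List (ℕ × ℕ)} {q : ℕ × ℕ} (hq : q ∈ S) : q.2 ≤ hEnd S q.1 := by
  induction S with
  | nil => cases hq
  | cons r S ih =>
    rw [hEnd_cons]
    rcases List.mem_cons.mp hq with rfl | hq
    · simp
    · exact (ih hq).trans (Nat.le_add_left _ _)

theorem hEnd_add_le_of_lt {S : List (ℕ × ℕ)} {q : ℕ × ℕ} (hq : q ∈ S) {v : ℕ} (hv : v < q.1) :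
    hEnd S v + q.2 ≤ hEnd S q.1 := by
  induction S with
  | nil => cases hq
  | cons r S ih =>
    simp only [hEnd_cons]
    rcases List.mem_cons.mp hq with rfl | hq
    · have := hEnd_mono S hv.le
      simp only [if_neg hv.not_ge, le_refl, if_true]
      omega
    · have := ih hq
      split_ifs <;> omega

def run (S : List (ℕ × ℕ)) (p : ℕ × ℕ) : List ℕ :=
  List.range' (hEnd S p.1 - p.2 + 1) p.2

theorem blow_eq_flatMap_run (S : List (ℕ × ℕ)) : blow S = S.flatMap (run S) := rfl

theorem length_run (S : List (ℕ × ℕ)) (p : ℕ × ℕ) : (run S p).length = p.2 :=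
  List.length_range'

theorem length_flatMap_run (S T : List (ℕ × ℕ)) :
    (T.flatMap (run S)).length = (T.map Prod.snd).sum := by
  simp [List.length_flatMap, length_run]

theorem pairwise_run (S : List (ℕ × ℕ)) (p : ℕ × ℕ) : (run S p).Pairwise (· < ·) :=
  List.pairwise_lt_range'

theorem run_lt_run {S : List (ℕ × ℕ)} {p q : ℕ × ℕ} (hp : p ∈ S) (hq : q ∈ S)
    (hpq : p.1 < q.1) {a b : ℕ} (ha : a ∈ run S p) (hb : b ∈ run S q) : a < b := by
  rw [run, List.mem_range'_1] at ha hb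
  have := le_hEnd_of_mem hp
  have := le_hEnd_of_mem hq
  have := hEnd_add_le_of_lt hq hpq
  omega

theorem le_hisWeight {S T : List (ℕ × ℕ)} (hT : T.Sublist S)
    (hTp : (T.map Prod.fst).Pairwise (· < ·)) : (T.map Prod.snd).sum ≤ hisWeight S :=
  le_csSup ⟨(S.map Prod.snd).sum, by
      rintro x ⟨T, hT, -, rfl⟩
      exact (hT.map Prod.snd).sum_le_sum fun a _ => a.zero_le⟩
    ⟨T, hT, List.isChain_iff_pairwise.mpr hTp, rfl⟩

theorem hisWeight_le {S : List (ℕ × ℕ)} {n : ℕ}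
    (h : ∀ T : List (ℕ × ℕ), T.Sublist S → (T.map Prod.fst).Pairwise (· < ·) →
      (T.map Prod.snd).sum ≤ n) :
    hisWeight S ≤ n :=
  csSup_le ⟨0, [], List.nil_sublist _, List.isChain_nil, rfl⟩ <| by
    rintro x ⟨T, hT, hc, rfl⟩
    exact h T hT (List.isChain_iff_pairwise.mp hc)

theorem le_lisLength {L T : List ℕ} (hT : T.Sublist L) (hTp : T.Pairwise (· < ·)) :
    T.length ≤ lisLength L :=
  le_csSup ⟨L.length, by rintro x ⟨T, hT, -, rfl⟩; exact hT.length_le⟩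
    ⟨T, hT, List.isChain_iff_pairwise.mpr hTp, rfl⟩

theorem lisLength_le {L : List ℕ} {n : ℕ}
    (h : ∀ T : List ℕ, T.Sublist L → T.Pairwise (· < ·) → T.length ≤ n) :
    lisLength L ≤ n :=
  csSup_le ⟨0, [], List.nil_sublist _, List.isChain_nil, rfl⟩ <| by
    rintro x ⟨T, hT, hc, rfl⟩
    exact h T hT (List.isChain_iff_pairwise.mp hc)

theorem his_eq_lis_of_blowup (S : List (ℕ × ℕ)) (hnd : (S.map Prod.fst).Nodup) :
    hisWeight S = lisLength (blow S) := by
  have hsep : ∀ p ∈ S, ∀ q ∈ S, p.1 < q.1 → ∀ a ∈ run S p, ∀ b ∈ run S q, a < b :=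
    fun _ hp _ hq hpq _ ha _ hb => run_lt_run hp hq hpq ha hb
  rw [blow_eq_flatMap_run]
  refine le_antisymm (hisWeight_le fun T hT hTp => ?_) (lisLength_le fun T hT hTp => ?_)
  · refine length_flatMap_run S T ▸ le_lisLength (hT.flatMap (run S)) ?_
    exact pairwise_flatMap_of_runs_separated hTp (fun p _ => pairwise_run S p)
      fun p hp q hq => hsep p (hT.subset hp) q (hT.subset hq)
  · obtain ⟨U, hU, hUp, hTU, -⟩ := exists_sublist_length_le_sum_of_sublist_flatMap hnd
      (fun p _ => (length_run S p).le) hsep hT hTp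
    exact hTU.trans (le_hisWeight hU hUp)
end

section
/- The length of the DTW distance sequence S_{A,B} satisfies |S_{A,B}| = ∑_{i=1}^m ∑_{j=1}^n (c − d_{A,B}(i,j)) + c(m−1)(n−1), and hence |S_{A,B}| ≤ c·(2mn − m − n + 1) = O(c·m·n). -/
lemma sum_flatMap' {α : Type*} (l : List α) (f : α → List ℕ) :
    (l.flatMap f).sum = (l.map fun a => (f a).sum).sum := by
  induction l with
  | nil => simp
  | cons a l ih => simp [List.flatMap_cons, ih]

/-- The value `r(i,j) = (j-1)(2m-1) + i`. -/
def vr (m i j : ℕ) : ℕ := (j - 1) * (2 * m - 1) + i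

/-- The value `r̃(i,j) = (j-1)(2m-1) - i + 2`. -/
def vrt (m i j : ℕ) : ℕ := (j - 1) * (2 * m - 1) - i + 2

/-- The weighted sequence `R_{A,B}` as a list of value-weight pairs, in position
order: row block `i` consists of `r(i,1), …, r(i,n)` (weights `c - d(i,j)`) followed,
if `i < m`, by `r̃(i+1,n), …, r̃(i+1,2)` (weights `c`). -/
def Rw (m n c : ℕ) (d : ℕ → ℕ → ℕ) : List (ℕ × ℕ) :=
  (List.range m).flatMap fun i0 =>
    ((List.range n).map fun j0 => (vr m (i0 + 1) (j0 + 1), c - d (i0 + 1) (j0 + 1))) ++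
      (if i0 + 1 < m then (List.range (n - 1)).map fun k => (vrt m (i0 + 2) (n - k), c)
       else [])

/-- The DTW distance sequence `S_{A,B}`, obtained by blowing up each element of
`R_{A,B}` into its run of consecutive integers. -/
def Sseq (m n c : ℕ) (d : ℕ → ℕ → ℕ) : List ℕ := blow (Rw m n c d)

/-- The contiguous listSeg of `L` from (1-based) position `a` through position `b`. -/
def listSeg {α : Type*} (L : List α) (a b : ℕ) : List α := (L.drop (a - 1)).take (b + 1 - a)

/-- `G⊢[i] = g⊢(r(i,1))`: start position in `S_{A,B}` of the run of `r(i,1)`. -/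
def Gl (m n c : ℕ) (d : ℕ → ℕ → ℕ) (i : ℕ) : ℕ :=
  (((Rw m n c d).take ((i - 1) * (2 * n - 1))).map Prod.snd).sum + 1

/-- `G⊣[i] = g⊣(r(i,n))`: end position in `S_{A,B}` of the run of `r(i,n)`. -/
def Gr (m n c : ℕ) (d : ℕ → ℕ → ℕ) (i : ℕ) : ℕ :=
  (((Rw m n c d).take ((i - 1) * (2 * n - 1) + n)).map Prod.snd).sum

/-- `H⊢[j] = h⊢(r(1,j))`: first value of the run of `r(1,j)`. -/
def Hl (m n c : ℕ) (d : ℕ → ℕ → ℕ) (j : ℕ) : ℕ :=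
  hEnd (Rw m n c d) (vr m 1 j) - (c - d 1 j) + 1

/-- `H⊣[j] = h⊣(r(m,j))`: last value of the run of `r(m,j)`. -/
def Hr (m n c : ℕ) (d : ℕ → ℕ → ℕ) (j : ℕ) : ℕ :=
  hEnd (Rw m n c d) (vr m m j)

/-- The `[lo:hi]`-banded LIS length of an integer sequence. -/
noncomputable def bandLIS (lo hi : ℕ) (L : List ℕ) : ℕ :=
  sSup {x | ∃ T : List ℕ, T.Sublist L ∧ T.Chain' (· < ·) ∧
    (∀ v ∈ T, lo ≤ v ∧ v ≤ hi) ∧ x = T.length}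

/-- The `[lo:hi]`-banded HIS weight of a weighted integer sequence. -/
noncomputable def bandHISw (lo hi : ℕ) (L : List (ℕ × ℕ)) : ℕ :=
  sSup {x | ∃ T : List (ℕ × ℕ), T.Sublist L ∧ (T.map Prod.fst).Chain' (· < ·) ∧
    (∀ p ∈ T, lo ≤ p.1 ∧ p.1 ≤ hi) ∧ x = (T.map Prod.snd).sum}


theorem Sseq_length (m n c : ℕ) (d : ℕ → ℕ → ℕ)
    (hm : 1 ≤ m) (hn : 1 ≤ n) (hd : ∀ i j, d i j ≤ c) :
    (Sseq m n c d).length =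
        (∑ i ∈ Finset.Icc 1 m, ∑ j ∈ Finset.Icc 1 n, (c - d i j)) +
          c * (m - 1) * (n - 1) ∧
      (Sseq m n c d).length ≤ c * (2 * m * n - m - n + 1) := by
  have hlen : (Sseq m n c d).length = ((Rw m n c d).map Prod.snd).sum := by
    simp [Sseq, blow, List.length_flatMap, Function.comp_def]
  have hsum : ((Rw m n c d).map Prod.snd).sum =
      (∑ i0 ∈ Finset.range m, ∑ j0 ∈ Finset.range n, (c - d (i0+1) (j0+1))) +
        c * (m - 1) * (n - 1) := by
    rw [Rw, List.map_flatMap, sum_flatMap']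
    have : ((List.range m).map fun i0 =>
        (((((List.range n).map fun j0 => (vr m (i0 + 1) (j0 + 1), c - d (i0 + 1) (j0 + 1))) ++
          (if i0 + 1 < m then (List.range (n - 1)).map fun k => (vrt m (i0 + 2) (n - k), c)
           else [])).map Prod.snd)).sum).sum
        = ∑ i0 ∈ Finset.range m,
          ((∑ j0 ∈ Finset.range n, (c - d (i0+1) (j0+1))) +
            if i0 + 1 < m then (n-1) * c else 0) := by
      rw [show ∀ (g : ℕ → ℕ), ((List.range m).map g).sum = ∑ i ∈ Finset.range m, g i
          from fun g => rfl]
      refine Finset.sum_congr rfl fun i0 _ => ?_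
      rw [List.map_append, List.sum_append, List.map_map]
      refine congrArg₂ (· + ·) rfl ?_
      split <;> simp [Function.comp_def, Nat.mul_comm]
    rw [this, Finset.sum_add_distrib]
    congr 1
    rw [← Finset.sum_filter]
    have hf : (Finset.range m).filter (fun i0 => i0 + 1 < m) = Finset.range (m-1) := by
      ext x
      simp only [Finset.mem_filter, Finset.mem_range]
      omega
    rw [hf, Finset.sum_const, Finset.card_range, smul_eq_mul]
    ring
  have hconv : (∑ i ∈ Finset.Icc 1 m, ∑ j ∈ Finset.Icc 1 n, (c - d i j))
      = ∑ i0 ∈ Finset.range m, ∑ j0 ∈ Finset.range n, (c - d (i0+1) (j0+1)) := by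
    rw [← Finset.Ico_add_one_right_eq_Icc, Finset.sum_Ico_eq_sum_range]
    simp only [Nat.add_sub_cancel, Nat.succ_sub_one]
    refine Finset.sum_congr rfl fun i0 _ => ?_
    rw [← Finset.Ico_add_one_right_eq_Icc, Finset.sum_Ico_eq_sum_range]
    simp only [Nat.add_sub_cancel, Nat.succ_sub_one]
    refine Finset.sum_congr rfl fun j0 _ => ?_
    rw [Nat.add_comm 1 i0, Nat.add_comm 1 j0]
  have h1 : (Sseq m n c d).length =
      (∑ i ∈ Finset.Icc 1 m, ∑ j ∈ Finset.Icc 1 n, (c - d i j)) + c * (m - 1) * (n - 1) := by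
    rw [hlen, hsum, hconv]
  refine ⟨h1, ?_⟩
  rw [h1]
  have hbd : (∑ i ∈ Finset.Icc 1 m, ∑ j ∈ Finset.Icc 1 n, (c - d i j)) ≤ m * n * c := by
    calc (∑ i ∈ Finset.Icc 1 m, ∑ j ∈ Finset.Icc 1 n, (c - d i j))
        ≤ ∑ i ∈ Finset.Icc 1 m, ∑ j ∈ Finset.Icc 1 n, c :=
          Finset.sum_le_sum fun i _ => Finset.sum_le_sum fun j _ => Nat.sub_le _ _
      _ = m * n * c := by
          simp [Nat.Icc_eq_range', Finset.sum_const, Nat.mul_assoc]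
  obtain ⟨m', rfl⟩ : ∃ m', m = m' + 1 := ⟨m - 1, by omega⟩
  obtain ⟨n', rfl⟩ : ∃ n', n = n' + 1 := ⟨n - 1, by omega⟩
  have he : c * (2 * (m'+1) * (n'+1) - (m'+1) - (n'+1) + 1)
      = (m'+1) * (n'+1) * c + c * ((m'+1) - 1) * ((n'+1) - 1) := by
    have h2 : 2 * (m'+1) * (n'+1) - (m'+1) - (n'+1) + 1 = (m'+1)*(n'+1) + m'*n' := by
      have hX : (m'+1)*(n'+1) = m'*n' + m' + n' + 1 := by ring
      have hX2 : 2 * (m'+1) * (n'+1) = 2*(m'*n' + m' + n' + 1) := by ring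
      omega
    rw [h2]
    simp only [Nat.add_sub_cancel]
    ring
  rw [he]
  exact Nat.add_le_add_right hbd _
end
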